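/- arXiv:1401.2037 — 3 statements merged into one kernel-verified Lean document; each statement's English description precedes it below -/
import Mathlib

section
/- Let (L,R) and (L',R') be adjunctions fitting into a square R'F = GR, let ζ : L'G → FL be the canonical transformation, and assume R'ζR is a natural isomorphism and G is conservative. If η'R'FA is an isomorphism for an object A, then ηRA is an isomorphism. Consequently if the adjunction (L',R') is idempotent, then (L,R) is idempotent. -/
open CategoryTheory

theorem isIso_unit_app_of_commutation_square
    {A B A' B' : Type*} [Category A] [Category B] [Category A'] [Category B']
    {L : B ⥤ A} {R : A ⥤ B} {L' : B' ⥤ A'} {R' : A' ⥤ B'}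
    (adj : L ⊣ R) (adj' : L' ⊣ R') {F : A ⥤ A'} {G : B ⥤ B'} (e : F ⋙ R' = R ⋙ G)
    {ζ : G ⋙ L' ⟶ L ⋙ F} [G.ReflectsIsomorphisms] {b : B}
    (hζ : adj'.unit.app (G.obj b) ≫ R'.map (ζ.app b) ≫
        eqToHom (Functor.congr_obj e (L.obj b)) = G.map (adj.unit.app b))
    [IsIso (adj'.unit.app (G.obj b))] [IsIso (R'.map (ζ.app b))] :
    IsIso (adj.unit.app b) := by
  have : IsIso (G.map (adj.unit.app b)) := hζ ▸ inferInstance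
  exact isIso_of_reflects_iso _ G

/-- Let `(L,R)` and `(L',R')` be adjunctions fitting into a square
`R'F = GR`, let `ζ : L'G ⟶ FL` be the canonical transformation (characterised by
`R'ζ ∘ η'G = Gη`), assume `R'ζR` is a (componentwise) isomorphism and `G` is
conservative.  Then: (1) if `η'R'FA` is an isomorphism for an object `A`, so is `ηRA`;
(2) if the adjunction `(L',R')` is idempotent (i.e. `η'R'` is an isomorphism), then
`(L,R)` is idempotent (i.e. `ηR` is an isomorphism). -/
theorem idempotent_of_commutation_square
    {A B A' B' : Type*} [Category A] [Category B] [Category A'] [Category B']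
    {L : B ⥤ A} {R : A ⥤ B} {L' : B' ⥤ A'} {R' : A' ⥤ B'}
    (adj : L ⊣ R) (adj' : L' ⊣ R')
    (F : A ⥤ A') (G : B ⥤ B') (e : F ⋙ R' = R ⋙ G)
    (ζ : G ⋙ L' ⟶ L ⋙ F)
    (hζ : ∀ b : B, adj'.unit.app (G.obj b) ≫ R'.map (ζ.app b) ≫
        eqToHom (Functor.congr_obj e (L.obj b)) = G.map (adj.unit.app b))
    (hζR : ∀ a : A, IsIso (R'.map (ζ.app (R.obj a))))
    [G.ReflectsIsomorphisms] :
    (∀ a : A, IsIso (adj'.unit.app (R'.obj (F.obj a))) → IsIso (adj.unit.app (R.obj a))) ∧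
    ((∀ a' : A', IsIso (adj'.unit.app (R'.obj a'))) →
      ∀ a : A, IsIso (adj.unit.app (R.obj a))) := by
  have unit_R : ∀ a : A, IsIso (adj'.unit.app (R'.obj (F.obj a))) →
      IsIso (adj.unit.app (R.obj a)) := by
    intro a hη'
    rw [show R'.obj (F.obj a) = G.obj (R.obj a) from Functor.congr_obj e a] at hη'
    exact isIso_unit_app_of_commutation_square adj adj' e (hζ (R.obj a))
  exact ⟨unit_R, fun hη' a => unit_R a (hη' (F.obj a))⟩
end

section
/- Let M be a monoidal category whose tensor functors preserve coequalizers of reflexive pairs. Given two coequalizers p₁ : Y₁ → Z₁ of a reflexive pair (f₁,g₁) : X₁ ⇉ Y₁ and p₂ : Y₂ → Z₂ of a reflexive pair (f₂,g₂) : X₂ ⇉ Y₂, the morphism p₁⊗p₂ : Y₁⊗Y₂ → Z₁⊗Z₂ is a coequalizer of the pair (f₁⊗f₂, g₁⊗g₂). -/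
/-!
Write `p₁ ⊗ p₂ = (p₁ ▷ Y₂) ≫ (Z₁ ◁ p₂)`. By the preservation hypothesis, `p₁ ▷ Y₂` and `Z₁ ◁ p₂`
are coequalizers of the whiskered pairs. Precomposing with `X₁ ◁ s₂` (resp. `s₁ ▷ X₂`), where
`sᵢ` is the common section of `(fᵢ, gᵢ)`, turns `f₁ ⊗ f₂` and `g₁ ⊗ g₂` into `f₁ ▷ Y₂` and
`g₁ ▷ Y₂` (resp. `Y₁ ◁ f₂` and `Y₁ ◁ g₂`), so a map coequalizing the tensor pair factors first
through `p₁ ▷ Y₂` and then, using that `p₁ ▷ X₂` is epi, through `Z₁ ◁ p₂`.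
-/

open CategoryTheory CategoryTheory.Limits MonoidalCategory

section

variable {C : Type*} [Category C] [MonoidalCategory C] {X₁ Y₁ Z₁ X₂ Y₂ Z₂ T : C}
  {f₁ g₁ : X₁ ⟶ Y₁} {f₂ g₂ : X₂ ⟶ Y₂}

lemma whiskerRight_comp_eq_of_tensorHom_comp_eq [IsReflexivePair f₂ g₂] {h : Y₁ ⊗ Y₂ ⟶ T}
    (hh : (f₁ ⊗ₘ f₂) ≫ h = (g₁ ⊗ₘ g₂) ≫ h) : f₁ ▷ Y₂ ≫ h = g₁ ▷ Y₂ ≫ h := by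
  have hf : f₁ ▷ Y₂ = X₁ ◁ commonSection f₂ g₂ ≫ (f₁ ⊗ₘ f₂) := by
    simp [whiskerLeft_comp_tensorHom]
  have hg : g₁ ▷ Y₂ = X₁ ◁ commonSection f₂ g₂ ≫ (g₁ ⊗ₘ g₂) := by
    simp [whiskerLeft_comp_tensorHom]
  rw [hf, hg, Category.assoc, Category.assoc, hh]

lemma whiskerLeft_comp_eq_of_tensorHom_comp_eq [IsReflexivePair f₁ g₁] {h : Y₁ ⊗ Y₂ ⟶ T}
    (hh : (f₁ ⊗ₘ f₂) ≫ h = (g₁ ⊗ₘ g₂) ≫ h) : Y₁ ◁ f₂ ≫ h = Y₁ ◁ g₂ ≫ h := by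
  have hf : Y₁ ◁ f₂ = commonSection f₁ g₁ ▷ X₂ ≫ (f₁ ⊗ₘ f₂) := by
    simp [whiskerRight_comp_tensorHom]
  have hg : Y₁ ◁ g₂ = commonSection f₁ g₁ ▷ X₂ ≫ (g₁ ⊗ₘ g₂) := by
    simp [whiskerRight_comp_tensorHom]
  rw [hf, hg, Category.assoc, Category.assoc, hh]

lemma whiskerLeft_comp_eq_of_whiskerRight_comp_eq [IsReflexivePair f₁ g₁] {p₁ : Y₁ ⟶ Z₁}
    [Epi (p₁ ▷ X₂)] {k : Z₁ ⊗ Y₂ ⟶ T} {h : Y₁ ⊗ Y₂ ⟶ T} (hk : p₁ ▷ Y₂ ≫ k = h)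
    (hh : (f₁ ⊗ₘ f₂) ≫ h = (g₁ ⊗ₘ g₂) ≫ h) : Z₁ ◁ f₂ ≫ k = Z₁ ◁ g₂ ≫ k := by
  rw [← cancel_epi (p₁ ▷ X₂), ← whisker_exchange_assoc, ← whisker_exchange_assoc, hk,
    whiskerLeft_comp_eq_of_tensorHom_comp_eq hh]

noncomputable def isColimitCoforkTensorHom [IsReflexivePair f₁ g₁] [IsReflexivePair f₂ g₂]
    [PreservesColimit (parallelPair f₁ g₁) (tensorRight X₂)]
    [PreservesColimit (parallelPair f₁ g₁) (tensorRight Y₂)]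
    [PreservesColimit (parallelPair f₂ g₂) (tensorLeft Z₁)]
    {p₁ : Y₁ ⟶ Z₁} {p₂ : Y₂ ⟶ Z₂} {w₁ : f₁ ≫ p₁ = g₁ ≫ p₁} {w₂ : f₂ ≫ p₂ = g₂ ≫ p₂}
    (h₁ : IsColimit (Cofork.ofπ p₁ w₁)) (h₂ : IsColimit (Cofork.ofπ p₂ w₂)) :
    IsColimit (Cofork.ofπ (p₁ ⊗ₘ p₂)
      (show (f₁ ⊗ₘ f₂) ≫ (p₁ ⊗ₘ p₂) = (g₁ ⊗ₘ g₂) ≫ (p₁ ⊗ₘ p₂) by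
        rw [tensorHom_comp_tensorHom, tensorHom_comp_tensorHom, w₁, w₂])) :=
  let L₁ := isColimitCoforkMapOfIsColimit (tensorRight Y₂) w₁ h₁
  let L₂ := isColimitCoforkMapOfIsColimit (tensorLeft Z₁) w₂ h₂
  have : Epi (p₁ ▷ X₂) :=
    Cofork.IsColimit.epi (isColimitCoforkMapOfIsColimit (tensorRight X₂) w₁ h₁)
  have : Epi (p₁ ▷ Y₂) := Cofork.IsColimit.epi L₁
  have : Epi (Z₁ ◁ p₂) := Cofork.IsColimit.epi L₂
  have : Epi (p₁ ⊗ₘ p₂) := by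
    rw [MonoidalCategory.tensorHom_def]
    infer_instance
  Cofork.IsColimit.mk' _ fun s =>
    let k := Cofork.IsColimit.desc L₁ s.π (whiskerRight_comp_eq_of_tensorHom_comp_eq s.condition)
    have hk : p₁ ▷ Y₂ ≫ k = s.π := Cofork.IsColimit.π_desc L₁
    let d := Cofork.IsColimit.desc L₂ k
      (whiskerLeft_comp_eq_of_whiskerRight_comp_eq hk s.condition)
    have hd : Z₁ ◁ p₂ ≫ d = k := Cofork.IsColimit.π_desc L₂
    have hπ : (p₁ ⊗ₘ p₂) ≫ d = s.π := by
      rw [MonoidalCategory.tensorHom_def p₁ p₂, Category.assoc, hd, hk]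
    ⟨d, hπ, fun hm => (cancel_epi (p₁ ⊗ₘ p₂)).1 (hm.trans hπ.symm)⟩

end

/-- Let `M` be a monoidal category whose tensor functors preserve
coequalizers of reflexive pairs.  Given coequalizers `p₁ : Y₁ ⟶ Z₁` of a reflexive
pair `(f₁,g₁)` and `p₂ : Y₂ ⟶ Z₂` of a reflexive pair `(f₂,g₂)`, the morphism
`p₁ ⊗ p₂ : Y₁ ⊗ Y₂ ⟶ Z₁ ⊗ Z₂` is a coequalizer of `(f₁ ⊗ f₂, g₁ ⊗ g₂)`. -/
theorem tensor_of_reflexive_coequalizers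
    (C : Type*) [Category C] [MonoidalCategory C]
    (htensor : ∀ (Z : C) {X Y : C} (f g : X ⟶ Y), IsReflexivePair f g →
      Nonempty (PreservesColimit (parallelPair f g) (tensorLeft Z)) ∧
      Nonempty (PreservesColimit (parallelPair f g) (tensorRight Z)))
    {X₁ Y₁ Z₁ X₂ Y₂ Z₂ : C}
    (f₁ g₁ : X₁ ⟶ Y₁) (hr₁ : IsReflexivePair f₁ g₁)
    (f₂ g₂ : X₂ ⟶ Y₂) (hr₂ : IsReflexivePair f₂ g₂)
    (p₁ : Y₁ ⟶ Z₁) (w₁ : f₁ ≫ p₁ = g₁ ≫ p₁)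
    (p₂ : Y₂ ⟶ Z₂) (w₂ : f₂ ≫ p₂ = g₂ ≫ p₂)
    (h₁ : Nonempty (IsColimit (Cofork.ofπ p₁ w₁)))
    (h₂ : Nonempty (IsColimit (Cofork.ofπ p₂ w₂))) :
    Nonempty (IsColimit (Cofork.ofπ (p₁ ⊗ₘ p₂)
      (show (f₁ ⊗ₘ f₂) ≫ (p₁ ⊗ₘ p₂) = (g₁ ⊗ₘ g₂) ≫ (p₁ ⊗ₘ p₂) by
        rw [tensorHom_comp_tensorHom, tensorHom_comp_tensorHom, w₁, w₂]))) := by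
  have := (htensor X₂ f₁ g₁ hr₁).2.some
  have := (htensor Y₂ f₁ g₁ hr₁).2.some
  have := (htensor Z₁ f₂ g₂ hr₂).1.some
  exact ⟨isColimitCoforkTensorHom h₁.some h₂.some⟩
end

section
/- Let H be a quasi-bialgebra (H,m,u,Δ,ε,φ,λ,ρ) over a field k and F : H-Mod → Vect_k the forgetful functor from the monoidal category of left H-modules. Then the following are equivalent: (1) there exists a natural transformation ψ₂ making (F, id_k, ψ₂) a monoidal functor; (2) there exists an invertible element α ∈ H⊗H such that the twisted quasi-bialgebra H_α is an ordinary bialgebra; (3) there exists an invertible α ∈ H⊗H with φ = (H⊗Δ)(α⁻¹)·(1⊗α⁻¹)·(α⊗1)·(Δ⊗H)(α), (ε⊗H)(α) = λ and (H⊗ε)(α) = ρ. -/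
/-!
A natural family `ψ_{M,N}` is determined by `β = ψ_{H,H}(1 ⊗ 1)`: naturality along the
`H`-linear maps `H → M`, `h ↦ h • m`, forces `ψ_{M,N}` to be the action of `β ∈ H ⊗ H`, and
`ψ_{H,H}` is left multiplication by `β`, so `ψ` is invertible exactly when `β` is. Evaluated on
the regular module, the hexagon and the unit conditions become
`φ · (Δ ⊗ H)(β) · (β ⊗ 1) = (H ⊗ Δ)(β) · (1 ⊗ β)`, `λ · (ε ⊗ H)(β) = 1`, `ρ · (H ⊗ ε)(β) = 1`,
which say that the twist by `α = β⁻¹` has trivial `φ_α`, `λ_α`, `ρ_α`. Solving `φ_α = 1` for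
`φ` gives the third form.
-/

open TensorProduct

universe u

variable (k H : Type u) [Field k] [Ring H] [Algebra k H]

namespace QB

/-- `id ⊗ Δ` as an algebra map. -/
noncomputable def idΔ (Δ : H →ₐ[k] H ⊗[k] H) :
    H ⊗[k] H →ₐ[k] H ⊗[k] (H ⊗[k] H) :=
  Algebra.TensorProduct.map (AlgHom.id k H) Δ

/-- `Δ ⊗ id` as an algebra map, reassociated to land in `H ⊗ (H ⊗ H)`. -/
noncomputable def Δid (Δ : H →ₐ[k] H ⊗[k] H) :
    H ⊗[k] H →ₐ[k] H ⊗[k] (H ⊗[k] H) :=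
  (Algebra.TensorProduct.assoc k k k H H H).toAlgHom.comp
    (Algebra.TensorProduct.map Δ (AlgHom.id k H))

/-- `ε ⊗ id : H ⊗ H →ₐ H`. -/
noncomputable def epsL (ε : H →ₐ[k] k) : H ⊗[k] H →ₐ[k] H :=
  (Algebra.TensorProduct.lid k H).toAlgHom.comp
    (Algebra.TensorProduct.map ε (AlgHom.id k H))

/-- `id ⊗ ε : H ⊗ H →ₐ H`. -/
noncomputable def epsR (ε : H →ₐ[k] k) : H ⊗[k] H →ₐ[k] H :=
  (Algebra.TensorProduct.rid k k H).toAlgHom.comp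
    (Algebra.TensorProduct.map (AlgHom.id k H) ε)

/-- `id ⊗ id ⊗ Δ` on triple tensors. -/
noncomputable def m₁ (Δ : H →ₐ[k] H ⊗[k] H) :
    H ⊗[k] (H ⊗[k] H) →ₐ[k] H ⊗[k] (H ⊗[k] (H ⊗[k] H)) :=
  Algebra.TensorProduct.map (AlgHom.id k H)
    (Algebra.TensorProduct.map (AlgHom.id k H) Δ)

/-- `Δ ⊗ id ⊗ id` on triple tensors (reassociated). -/
noncomputable def m₂ (Δ : H →ₐ[k] H ⊗[k] H) :
    H ⊗[k] (H ⊗[k] H) →ₐ[k] H ⊗[k] (H ⊗[k] (H ⊗[k] H)) :=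
  (Algebra.TensorProduct.assoc k k k H H (H ⊗[k] H)).toAlgHom.comp
    (Algebra.TensorProduct.map Δ (AlgHom.id k (H ⊗[k] H)))

/-- `id ⊗ Δ ⊗ id` on triple tensors (reassociated). -/
noncomputable def m₃ (Δ : H →ₐ[k] H ⊗[k] H) :
    H ⊗[k] (H ⊗[k] H) →ₐ[k] H ⊗[k] (H ⊗[k] (H ⊗[k] H)) :=
  Algebra.TensorProduct.map (AlgHom.id k H)
    ((Algebra.TensorProduct.assoc k k k H H H).toAlgHom.comp
      (Algebra.TensorProduct.map Δ (AlgHom.id k H)))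

/-- `x ⊗ 1`, reassociated into `H ⊗ (H ⊗ (H ⊗ H))`. -/
noncomputable def timesOne (x : H ⊗[k] (H ⊗[k] H)) :
    H ⊗[k] (H ⊗[k] (H ⊗[k] H)) :=
  (Algebra.TensorProduct.map (AlgHom.id k H)
      (Algebra.TensorProduct.assoc k k k H H H).toAlgHom)
    ((Algebra.TensorProduct.assoc k k k H (H ⊗[k] H) H) (x ⊗ₜ[k] (1 : H)))

/-- `id ⊗ ε ⊗ id` on triple tensors. -/
noncomputable def epsMid (ε : H →ₐ[k] k) :
    H ⊗[k] (H ⊗[k] H) →ₐ[k] H ⊗[k] H :=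
  Algebra.TensorProduct.map (AlgHom.id k H) (epsL k H ε)

/-- A quasi-bialgebra (in the general sense of Drinfeld, with unit constraints
`λ`, `ρ`): `Δ`, `ε` are algebra maps, `φ` is an invertible counital 3-cocycle,
`Δ` is quasi-coassociative and counitary up to `λ` and `ρ`. -/
structure QuasiBialgebra where
  comul : H →ₐ[k] H ⊗[k] H
  counit : H →ₐ[k] k
  phi : H ⊗[k] (H ⊗[k] H)
  phiInv : H ⊗[k] (H ⊗[k] H)
  lam : H
  lamInv : H
  rho : H
  rhoInv : H
  phi_inv : phi * phiInv = 1
  inv_phi : phiInv * phi = 1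
  lam_inv : lam * lamInv = 1
  inv_lam : lamInv * lam = 1
  rho_inv : rho * rhoInv = 1
  inv_rho : rhoInv * rho = 1
  cocycle : m₁ k H comul phi * m₂ k H comul phi =
    ((1 : H) ⊗ₜ[k] phi) * m₃ k H comul phi * timesOne k H phi
  counital : epsMid k H counit phi = rho ⊗ₜ[k] lamInv
  quasi_coassoc : ∀ h : H,
    idΔ k H comul (comul h) = phi * Δid k H comul (comul h) * phiInv
  counit_comul_left : ∀ h : H, epsL k H counit (comul h) = lamInv * h * lam
  counit_comul_right : ∀ h : H, epsR k H counit (comul h) = rhoInv * h * rho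

/-- A left `H`-module over the quasi-bialgebra: a `k`-vector space with an action of
`H` by an algebra map into its `k`-linear endomorphisms. -/
structure QRep where
  V : Type u
  [inst1 : AddCommGroup V]
  [inst2 : Module k V]
  ρ : H →ₐ[k] Module.End k V

attribute [instance] QRep.inst1 QRep.inst2

/-- `H`-linear maps between `H`-modules. -/
def QRepHom (M N : QRep k H) : Type u :=
  {f : M.V →ₗ[k] N.V // ∀ h : H, (N.ρ h) ∘ₗ f = f ∘ₗ (M.ρ h)}

variable {k H} in
/-- The tensor product of two `H`-modules, with the diagonal action through `Δ`. -/
noncomputable def tensorRep (Q : QuasiBialgebra k H) (M N : QRep k H) : QRep k H where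
  V := M.V ⊗[k] N.V
  ρ := ((Module.endTensorEndAlgHom (R := k) (S := k) (A := k)
      (M := M.V) (N := N.V)).comp
    (Algebra.TensorProduct.map M.ρ N.ρ)).comp Q.comul

variable {k H} in
/-- The unit `H`-module `k` with action through `ε`. -/
noncomputable def unitRep (Q : QuasiBialgebra k H) : QRep k H where
  V := k
  ρ := (Algebra.ofId k (Module.End k k)).comp Q.counit

variable {k H} in
/-- The action of `H ⊗ H ⊗ H` on a triple tensor product of modules. -/
noncomputable def end₃ (M N P : QRep k H) :
    H ⊗[k] (H ⊗[k] H) →ₐ[k] Module.End k (M.V ⊗[k] (N.V ⊗[k] P.V)) :=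
  (Module.endTensorEndAlgHom (R := k) (S := k) (A := k)
      (M := M.V) (N := N.V ⊗[k] P.V)).comp
    (Algebra.TensorProduct.map M.ρ
      ((Module.endTensorEndAlgHom (R := k) (S := k) (A := k)
          (M := N.V) (N := P.V)).comp
        (Algebra.TensorProduct.map N.ρ P.ρ)))

variable {k H}

attribute [reducible] tensorRep unitRep

section InversePairs

variable {G : Type*} [Monoid G]

theorem mul_mul_mul_mul_eq_one_iff {a a' b b' x c d : G} (ha : a * a' = 1) (ha' : a' * a = 1)
    (hb : b * b' = 1) (hb' : b' * b = 1) : a * b * x * c * d = 1 ↔ x * c * d = b' * a' := by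
  constructor
  · intro h
    calc x * c * d = b' * (a' * a) * b * (x * c * d) := by rw [ha', mul_one, hb', one_mul]
      _ = b' * a' * (a * b * x * c * d) := by simp only [mul_assoc]
      _ = b' * a' := by rw [h, mul_one]
  · intro h
    calc a * b * x * c * d = a * b * (x * c * d) := by simp only [mul_assoc]
      _ = a * (b * b') * a' := by rw [h]; simp only [mul_assoc]
      _ = 1 := by rw [hb, mul_one, ha]

theorem mul_mul_eq_iff_eq_mul_mul {c c' d d' x e : G} (hc : c * c' = 1) (hc' : c' * c = 1)
    (hd : d * d' = 1) (hd' : d' * d = 1) : x * c * d = e ↔ x = e * d' * c' := by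
  constructor
  · rintro rfl
    calc x = x * c * (d * d') * c' := by rw [hd, mul_one, mul_assoc, hc, mul_one]
      _ = x * c * d * d' * c' := by simp only [mul_assoc]
  · rintro rfl
    calc e * d' * c' * c * d = e * d' * (c' * c) * d := by simp only [mul_assoc]
      _ = e := by rw [hc', mul_one, mul_assoc, hd', mul_one]

theorem mul_eq_one_iff_eq_of_inverse {a b c : G} (hab : a * b = 1) (hba : b * a = 1) :
    c * b = 1 ↔ a = c :=
  ⟨fun h => (left_inv_eq_right_inv h hba).symm, fun h => h ▸ hab⟩

end InversePairs

noncomputable abbrev tmulOne : H ⊗[k] H →ₐ[k] H ⊗[k] (H ⊗[k] H) :=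
  (Algebra.TensorProduct.assoc k k k H H H).toAlgHom.comp Algebra.TensorProduct.includeLeft

section Twist

variable (Q : QuasiBialgebra k H) {α β : H ⊗[k] H}

theorem twist_phi_eq_one_iff (hαβ : α * β = 1) (hβα : β * α = 1) :
    ((1 : H) ⊗ₜ[k] α) * idΔ k H Q.comul α * Q.phi * Δid k H Q.comul β * tmulOne β = 1 ↔
      Q.phi * Δid k H Q.comul β * tmulOne β = idΔ k H Q.comul β * ((1 : H) ⊗ₜ[k] β) :=
  mul_mul_mul_mul_eq_one_iff (map_mul_eq_one Algebra.TensorProduct.includeRight hαβ)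
    (map_mul_eq_one Algebra.TensorProduct.includeRight hβα)
    (map_mul_eq_one (idΔ k H Q.comul) hαβ) (map_mul_eq_one (idΔ k H Q.comul) hβα)

theorem phi_mul_eq_iff_phi_eq (hαβ : α * β = 1) (hβα : β * α = 1) :
    Q.phi * Δid k H Q.comul β * tmulOne β = idΔ k H Q.comul β * ((1 : H) ⊗ₜ[k] β) ↔
      Q.phi = idΔ k H Q.comul β * ((1 : H) ⊗ₜ[k] β) * tmulOne α * Δid k H Q.comul α :=
  mul_mul_eq_iff_eq_mul_mul (map_mul_eq_one (Δid k H Q.comul) hβα)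
    (map_mul_eq_one (Δid k H Q.comul) hαβ) (map_mul_eq_one tmulOne hβα)
    (map_mul_eq_one tmulOne hαβ)

theorem twist_trivial_iff (hαβ : α * β = 1) (hβα : β * α = 1) :
    (((1 : H) ⊗ₜ[k] α) * idΔ k H Q.comul α * Q.phi * Δid k H Q.comul β * tmulOne β = 1 ∧
        Q.lam * epsL k H Q.counit β = 1 ∧ Q.rho * epsR k H Q.counit β = 1) ↔
      (Q.phi = idΔ k H Q.comul β * ((1 : H) ⊗ₜ[k] β) * tmulOne α * Δid k H Q.comul α ∧
        epsL k H Q.counit α = Q.lam ∧ epsR k H Q.counit α = Q.rho) :=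
  and_congr ((twist_phi_eq_one_iff Q hαβ hβα).trans (phi_mul_eq_iff_phi_eq Q hαβ hβα)) <|
    and_congr (mul_eq_one_iff_eq_of_inverse (map_mul_eq_one _ hαβ) (map_mul_eq_one _ hβα))
      (mul_eq_one_iff_eq_of_inverse (map_mul_eq_one _ hαβ) (map_mul_eq_one _ hβα))

end Twist

noncomputable def end₂ (M N : QRep k H) : H ⊗[k] H →ₐ[k] Module.End k (M.V ⊗[k] N.V) :=
  (Module.endTensorEndAlgHom (R := k) (S := k) (A := k) (M := M.V) (N := N.V)).comp
    (Algebra.TensorProduct.map M.ρ N.ρ)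

theorem end₂_tmul (M N : QRep k H) (a b : H) :
    end₂ M N (a ⊗ₜ[k] b) = TensorProduct.map (M.ρ a) (N.ρ b) := rfl

theorem end₃_tmul (M N P : QRep k H) (a : H) (y : H ⊗[k] H) :
    end₃ M N P (a ⊗ₜ[k] y) = TensorProduct.map (M.ρ a) (end₂ N P y) := rfl

variable (k H) in
noncomputable abbrev regularRep : QRep k H := { V := H, ρ := Algebra.lmul k H }

theorem end₂_regularRep_apply (x y : H ⊗[k] H) :
    end₂ (regularRep k H) (regularRep k H) x y = x * y := by
  induction x using TensorProduct.induction_on with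
  | zero => simp
  | add x₁ x₂ h₁ h₂ => simp [add_mul, h₁, h₂]
  | tmul a b =>
    induction y using TensorProduct.induction_on with
    | zero => simp
    | add y₁ y₂ h₁ h₂ => simp [mul_add, h₁, h₂]
    | tmul c d =>
      rw [end₂_tmul, TensorProduct.map_tmul, Algebra.TensorProduct.tmul_mul_tmul]
      rfl

theorem end₃_regularRep_apply (x y : H ⊗[k] (H ⊗[k] H)) :
    end₃ (regularRep k H) (regularRep k H) (regularRep k H) x y = x * y := by
  induction x using TensorProduct.induction_on with
  | zero => simp
  | add x₁ x₂ h₁ h₂ => simp [add_mul, h₁, h₂]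
  | tmul a b =>
    induction y using TensorProduct.induction_on with
    | zero => simp
    | add y₁ y₂ h₁ h₂ => simp [mul_add, h₁, h₂]
    | tmul c d =>
      rw [end₃_tmul, TensorProduct.map_tmul, end₂_regularRep_apply,
        Algebra.TensorProduct.tmul_mul_tmul]
      rfl

theorem end₂_natural {M N M' N' : QRep k H} (f : QRepHom k H M M') (g : QRepHom k H N N')
    (x : H ⊗[k] H) :
    TensorProduct.map f.1 g.1 ∘ₗ end₂ M N x = end₂ M' N' x ∘ₗ TensorProduct.map f.1 g.1 := by
  induction x using TensorProduct.induction_on with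
  | zero => simp
  | add x₁ x₂ h₁ h₂ => simp only [map_add, LinearMap.comp_add, LinearMap.add_comp, h₁, h₂]
  | tmul a b => rw [end₂_tmul, end₂_tmul, ← TensorProduct.map_comp, ← TensorProduct.map_comp,
      f.2 a, g.2 b]

/-- The `H`-linear map `h ↦ h • m` out of the regular module. -/
noncomputable def QRepHom.ofRegular (M : QRep k H) (m : M.V) : QRepHom k H (regularRep k H) M :=
  ⟨M.ρ.toLinearMap.flip m, fun h => LinearMap.ext fun h' => by
    change M.ρ h (M.ρ h' m) = M.ρ (h * h') m
    rw [map_mul, Module.End.mul_apply]⟩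

theorem map_ofRegular_apply (M N : QRep k H) (m : M.V) (n : N.V) (x : H ⊗[k] H) :
    TensorProduct.map (QRepHom.ofRegular M m).1 (QRepHom.ofRegular N n).1 x =
      end₂ M N x (m ⊗ₜ[k] n) := by
  induction x using TensorProduct.induction_on with
  | zero => simp
  | add x₁ x₂ h₁ h₂ => simp [h₁, h₂]
  | tmul a b => rfl

theorem eq_end₂_of_natural (ψ : ∀ M N : QRep k H, M.V ⊗[k] N.V →ₗ[k] M.V ⊗[k] N.V)
    (hψ : ∀ (M N M' N' : QRep k H) (f : QRepHom k H M M') (g : QRepHom k H N N'),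
      ψ M' N' ∘ₗ TensorProduct.map f.1 g.1 = TensorProduct.map f.1 g.1 ∘ₗ ψ M N)
    (M N : QRep k H) : ψ M N = end₂ M N (ψ (regularRep k H) (regularRep k H) 1) := by
  refine TensorProduct.ext' fun m n => ?_
  have h := LinearMap.congr_fun (hψ _ _ M N (QRepHom.ofRegular M m) (QRepHom.ofRegular N n)) 1
  rw [LinearMap.comp_apply, LinearMap.comp_apply, map_ofRegular_apply, map_ofRegular_apply,
    map_one, Module.End.one_apply] at h
  exact h

theorem assoc_comp_map_end₂ (M N P : QRep k H) (y : H ⊗[k] H) (b : H) :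
    (TensorProduct.assoc k M.V N.V P.V).toLinearMap ∘ₗ TensorProduct.map (end₂ M N y) (P.ρ b) =
      end₃ M N P (Algebra.TensorProduct.assoc k k k H H H (y ⊗ₜ[k] b)) ∘ₗ
        (TensorProduct.assoc k M.V N.V P.V).toLinearMap := by
  induction y using TensorProduct.induction_on with
  | zero => simp
  | add y₁ y₂ h₁ h₂ =>
    simp only [map_add, TensorProduct.add_tmul, TensorProduct.map_add_left, LinearMap.comp_add,
      LinearMap.add_comp, h₁, h₂]
  | tmul c d => exact TensorProduct.ext_threefold fun _ _ _ => rfl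

theorem assoc_comp_end₂_tensorRep (Q : QuasiBialgebra k H) (M N P : QRep k H)
    (x : H ⊗[k] H) :
    (TensorProduct.assoc k M.V N.V P.V).toLinearMap ∘ₗ end₂ (tensorRep Q M N) P x =
      end₃ M N P (Δid k H Q.comul x) ∘ₗ (TensorProduct.assoc k M.V N.V P.V).toLinearMap := by
  induction x using TensorProduct.induction_on with
  | zero => simp
  | add x₁ x₂ h₁ h₂ => simp only [map_add, LinearMap.comp_add, LinearMap.add_comp, h₁, h₂]
  | tmul a b => exact assoc_comp_map_end₂ M N P (Q.comul a) b

theorem end₂_tensorRep_right (Q : QuasiBialgebra k H) (M N P : QRep k H) (x : H ⊗[k] H) :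
    end₂ M (tensorRep Q N P) x = end₃ M N P (idΔ k H Q.comul x) := by
  induction x using TensorProduct.induction_on with
  | zero => simp
  | add x₁ x₂ h₁ h₂ => simp only [map_add, h₁, h₂]
  | tmul a b => rfl

theorem hexagon_end₂_iff (Q : QuasiBialgebra k H) (x : H ⊗[k] H) :
    (∀ M N P : QRep k H,
      (end₃ M N P Q.phi : Module.End k (M.V ⊗[k] (N.V ⊗[k] P.V))) ∘ₗ
          (TensorProduct.assoc k M.V N.V P.V).toLinearMap ∘ₗ
          end₂ (tensorRep Q M N) P x ∘ₗ TensorProduct.map (end₂ M N x) LinearMap.id =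
        end₂ M (tensorRep Q N P) x ∘ₗ TensorProduct.map LinearMap.id (end₂ N P x) ∘ₗ
          (TensorProduct.assoc k M.V N.V P.V).toLinearMap) ↔
      Q.phi * Δid k H Q.comul x * tmulOne x = idΔ k H Q.comul x * ((1 : H) ⊗ₜ[k] x) := by
  have left (M N P : QRep k H) :
      (end₃ M N P Q.phi : Module.End k (M.V ⊗[k] (N.V ⊗[k] P.V))) ∘ₗ
          (TensorProduct.assoc k M.V N.V P.V).toLinearMap ∘ₗ
          end₂ (tensorRep Q M N) P x ∘ₗ TensorProduct.map (end₂ M N x) LinearMap.id =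
        end₃ M N P (Q.phi * Δid k H Q.comul x * tmulOne x) ∘ₗ
          (TensorProduct.assoc k M.V N.V P.V).toLinearMap := by
    have h := assoc_comp_map_end₂ M N P x 1
    rw [map_one, Module.End.one_eq_id] at h
    rw [← LinearMap.comp_assoc _ _ (TensorProduct.assoc k M.V N.V P.V).toLinearMap,
      assoc_comp_end₂_tensorRep, LinearMap.comp_assoc, h]
    simp only [map_mul, Module.End.mul_eq_comp, LinearMap.comp_assoc]
    rfl
  have right (M N P : QRep k H) :
      end₂ M (tensorRep Q N P) x ∘ₗ TensorProduct.map LinearMap.id (end₂ N P x) ∘ₗ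
          (TensorProduct.assoc k M.V N.V P.V).toLinearMap =
        end₃ M N P (idΔ k H Q.comul x * ((1 : H) ⊗ₜ[k] x)) ∘ₗ
          (TensorProduct.assoc k M.V N.V P.V).toLinearMap := by
    rw [end₂_tensorRep_right, map_mul, Module.End.mul_eq_comp, LinearMap.comp_assoc, end₃_tmul,
      map_one, Module.End.one_eq_id]
  simp only [left, right]
  constructor
  · intro h
    have h₁ := LinearMap.congr_fun (h (regularRep k H) (regularRep k H) (regularRep k H))
      ((TensorProduct.assoc k H H H).symm 1)
    simp only [LinearMap.comp_apply, LinearEquiv.coe_coe, LinearEquiv.apply_symm_apply] at h₁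
    rwa [end₃_regularRep_apply, end₃_regularRep_apply, mul_one, mul_one] at h₁
  · intro h M N P
    rw [h]

theorem lid_comp_end₂_unitRep (Q : QuasiBialgebra k H) (M : QRep k H) (x : H ⊗[k] H) :
    (TensorProduct.lid k M.V).toLinearMap ∘ₗ end₂ (unitRep Q) M x =
      M.ρ (epsL k H Q.counit x) ∘ₗ (TensorProduct.lid k M.V).toLinearMap := by
  induction x using TensorProduct.induction_on with
  | zero => simp
  | add x₁ x₂ h₁ h₂ => simp only [map_add, LinearMap.comp_add, LinearMap.add_comp, h₁, h₂]
  | tmul a b =>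
    refine TensorProduct.ext' fun c m => ?_
    rw [LinearMap.comp_apply, end₂_tmul]
    simp [epsL, Algebra.smul_def, mul_smul, smul_comm (Q.counit a)]

theorem rid_comp_end₂_unitRep (Q : QuasiBialgebra k H) (M : QRep k H) (x : H ⊗[k] H) :
    (TensorProduct.rid k M.V).toLinearMap ∘ₗ end₂ M (unitRep Q) x =
      M.ρ (epsR k H Q.counit x) ∘ₗ (TensorProduct.rid k M.V).toLinearMap := by
  induction x using TensorProduct.induction_on with
  | zero => simp
  | add x₁ x₂ h₁ h₂ => simp only [map_add, LinearMap.comp_add, LinearMap.add_comp, h₁, h₂]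
  | tmul a b =>
    refine TensorProduct.ext' fun m c => ?_
    rw [LinearMap.comp_apply, end₂_tmul]
    simp [epsR, Algebra.smul_def, mul_smul, smul_comm (Q.counit b)]

theorem left_unitor_end₂_iff (Q : QuasiBialgebra k H) (c : H) (x : H ⊗[k] H) :
    (∀ M : QRep k H, (M.ρ c : Module.End k M.V) ∘ₗ (TensorProduct.lid k M.V).toLinearMap ∘ₗ
        end₂ (unitRep Q) M x = (TensorProduct.lid k M.V).toLinearMap) ↔
      c * epsL k H Q.counit x = 1 := by
  have h (M : QRep k H) :
      (M.ρ c : Module.End k M.V) ∘ₗ (TensorProduct.lid k M.V).toLinearMap ∘ₗ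
          end₂ (unitRep Q) M x =
        M.ρ (c * epsL k H Q.counit x) ∘ₗ (TensorProduct.lid k M.V).toLinearMap := by
    rw [lid_comp_end₂_unitRep, map_mul, Module.End.mul_eq_comp, LinearMap.comp_assoc]
  simp only [h]
  constructor
  · intro h₁
    simpa using LinearMap.congr_fun (h₁ (regularRep k H)) ((1 : k) ⊗ₜ[k] (1 : H))
  · intro h₁ M
    rw [h₁, map_one, Module.End.one_eq_id, LinearMap.id_comp]

theorem right_unitor_end₂_iff (Q : QuasiBialgebra k H) (c : H) (x : H ⊗[k] H) :
    (∀ M : QRep k H, (M.ρ c : Module.End k M.V) ∘ₗ (TensorProduct.rid k M.V).toLinearMap ∘ₗ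
        end₂ M (unitRep Q) x = (TensorProduct.rid k M.V).toLinearMap) ↔
      c * epsR k H Q.counit x = 1 := by
  have h (M : QRep k H) :
      (M.ρ c : Module.End k M.V) ∘ₗ (TensorProduct.rid k M.V).toLinearMap ∘ₗ
          end₂ M (unitRep Q) x =
        M.ρ (c * epsR k H Q.counit x) ∘ₗ (TensorProduct.rid k M.V).toLinearMap := by
    rw [rid_comp_end₂_unitRep, map_mul, Module.End.mul_eq_comp, LinearMap.comp_assoc]
  simp only [h]
  constructor
  · intro h₁
    simpa using LinearMap.congr_fun (h₁ (regularRep k H)) ((1 : H) ⊗ₜ[k] (1 : k))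
  · intro h₁ M
    rw [h₁, map_one, Module.End.one_eq_id, LinearMap.id_comp]

/-- Let `H` be a quasi-bialgebra over a field `k` and
`F : H-Mod ⥤ Vect_k` the forgetful functor from the monoidal category of left
`H`-modules (associativity constraint given by `φ`, unit constraints by `λ`, `ρ`).
The following are equivalent:
(1) there is a natural family `ψ₂` making `(F, id_k, ψ₂)` a monoidal functor;
(2) there is an invertible `α ∈ H ⊗ H` such that the twist `H_α` is an ordinary
bialgebra (`φ_α`, `λ_α`, `ρ_α` trivial);
(3) there is an invertible `α ∈ H ⊗ H` with
`φ = (H⊗Δ)(α⁻¹)·(1⊗α⁻¹)·(α⊗1)·(Δ⊗H)(α)`, `(ε⊗H)(α) = λ` and `(H⊗ε)(α) = ρ`. -/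
theorem forget_monoidal_iff_twist_trivial (Q : QuasiBialgebra k H) :
    (((∃ ψ : ∀ M N : QRep k H, (M.V ⊗[k] N.V) ≃ₗ[k] (M.V ⊗[k] N.V),
        (∀ (M N M' N' : QRep k H) (f : QRepHom k H M M') (g : QRepHom k H N N'),
          (ψ M' N').toLinearMap ∘ₗ TensorProduct.map f.1 g.1 =
            TensorProduct.map f.1 g.1 ∘ₗ (ψ M N).toLinearMap) ∧
        (∀ M N P : QRep k H,
          (end₃ M N P Q.phi : Module.End k (M.V ⊗[k] (N.V ⊗[k] P.V))) ∘ₗ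
              (TensorProduct.assoc k M.V N.V P.V).toLinearMap ∘ₗ
              (ψ (tensorRep Q M N) P).toLinearMap ∘ₗ
              TensorProduct.map (ψ M N).toLinearMap LinearMap.id =
            (ψ M (tensorRep Q N P)).toLinearMap ∘ₗ
              TensorProduct.map LinearMap.id (ψ N P).toLinearMap ∘ₗ
              (TensorProduct.assoc k M.V N.V P.V).toLinearMap) ∧
        (∀ M : QRep k H,
          (M.ρ Q.lam : Module.End k M.V) ∘ₗ
              (TensorProduct.lid k M.V).toLinearMap ∘ₗ
              (ψ (unitRep Q) M).toLinearMap =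
            (TensorProduct.lid k M.V).toLinearMap) ∧
        (∀ M : QRep k H,
          (M.ρ Q.rho : Module.End k M.V) ∘ₗ
              (TensorProduct.rid k M.V).toLinearMap ∘ₗ
              (ψ M (unitRep Q)).toLinearMap =
            (TensorProduct.rid k M.V).toLinearMap)) ↔
      (∃ α αInv : H ⊗[k] H, α * αInv = 1 ∧ αInv * α = 1 ∧
        ((1 : H) ⊗ₜ[k] α) * idΔ k H Q.comul α * Q.phi *
            Δid k H Q.comul αInv *
            (Algebra.TensorProduct.assoc k k k H H H) (αInv ⊗ₜ[k] (1 : H)) = 1 ∧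
        Q.lam * epsL k H Q.counit αInv = 1 ∧
        Q.rho * epsR k H Q.counit αInv = 1)) ∧
    ((∃ α αInv : H ⊗[k] H, α * αInv = 1 ∧ αInv * α = 1 ∧
        ((1 : H) ⊗ₜ[k] α) * idΔ k H Q.comul α * Q.phi *
            Δid k H Q.comul αInv *
            (Algebra.TensorProduct.assoc k k k H H H) (αInv ⊗ₜ[k] (1 : H)) = 1 ∧
        Q.lam * epsL k H Q.counit αInv = 1 ∧
        Q.rho * epsR k H Q.counit αInv = 1) ↔
      (∃ α αInv : H ⊗[k] H, α * αInv = 1 ∧ αInv * α = 1 ∧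
        Q.phi = idΔ k H Q.comul αInv * ((1 : H) ⊗ₜ[k] αInv) *
            (Algebra.TensorProduct.assoc k k k H H H) (α ⊗ₜ[k] (1 : H)) *
            Δid k H Q.comul α ∧
        epsL k H Q.counit α = Q.lam ∧
        epsR k H Q.counit α = Q.rho))) := by
  refine ⟨⟨fun ⟨ψ, hnat, hhex, hlam, hrho⟩ => ?_, fun ⟨α, β, hαβ, hβα, hφ, hlam, hrho⟩ => ?_⟩,
    exists_congr fun α => exists_congr fun β => ?_⟩
  · set β := ψ (regularRep k H) (regularRep k H) 1
    have hψ : ∀ M N, (ψ M N).toLinearMap = end₂ M N β :=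
      eq_end₂_of_natural (fun M N => (ψ M N).toLinearMap) hnat
    simp only [hψ] at hhex hlam hrho
    have hβ : IsUnit β := by
      refine IsUnit.isUnit_iff_mulLeft_bijective.mpr ?_
      convert (ψ (regularRep k H) (regularRep k H)).bijective using 1
      funext y
      rw [← LinearEquiv.coe_coe, hψ, end₂_regularRep_apply]
    exact ⟨_, β, hβ.val_inv_mul, hβ.mul_val_inv,
      (twist_phi_eq_one_iff Q hβ.val_inv_mul hβ.mul_val_inv).2 ((hexagon_end₂_iff Q β).1 hhex),
      (left_unitor_end₂_iff Q _ β).1 hlam, (right_unitor_end₂_iff Q _ β).1 hrho⟩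
  · refine ⟨fun M N => LinearEquiv.ofLinearMap (end₂ M N β) (end₂ M N α) ?_ ?_,
      fun _ _ _ _ f g => (end₂_natural f g β).symm,
      (hexagon_end₂_iff Q β).2 ((twist_phi_eq_one_iff Q hαβ hβα).1 hφ),
      (left_unitor_end₂_iff Q _ β).2 hlam, (right_unitor_end₂_iff Q _ β).2 hrho⟩
    · rw [← Module.End.mul_eq_comp, ← map_mul, hβα, map_one, Module.End.one_eq_id]
    · rw [← Module.End.mul_eq_comp, ← map_mul, hαβ, map_one, Module.End.one_eq_id]
  · exact and_congr_right fun hαβ => and_congr_right fun hβα => twist_trivial_iff Q hαβ hβα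

end QB
end
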